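/- Define E(n) = (Σ_{ℓ even, 0 ≤ ℓ ≤ n} C_{n-ℓ}C_ℓ) / (Σ_{ℓ=0}^{n} C_{n-ℓ}C_ℓ). Then E(2m) is a non-increasing sequence in m. -/

import Mathlib

/-!
Both `∑_{k ≤ m} C_{2(m-k)} C_{2k}` and `4^m C_m` satisfy `(m + 2) a_{m+1} = 8 (2m + 1) a_m`
(for the sum by WZ telescoping), so they agree. With the full convolution equal to `C_{2m+1}`
this gives `E(2m) = 4^m C_m / C_{2m+1}`, and `(n + 2) C_{n+1} = 2 (2n + 1) C_n` then yields
`E(2m+2) / E(2m) = 4 (2m+1)(2m+3) / ((4m+3)(4m+5)) < 1`.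
-/

/-- The even part of the Catalan convolution of total index n, as a fraction of the
full convolution. -/
noncomputable def catalanEvenPart (n : ℕ) : ℚ :=
  (∑ ℓ ∈ (Finset.range (n + 1)).filter (fun ℓ => Even ℓ),
      ((catalan (n - ℓ) : ℚ) * (catalan ℓ : ℚ))) /
    (∑ ℓ ∈ Finset.range (n + 1), ((catalan (n - ℓ) : ℚ) * (catalan ℓ : ℚ)))

open Finset

theorem succ_succ_mul_catalan_succ (n : ℕ) :
    (n + 2) * catalan (n + 1) = 2 * (2 * n + 1) * catalan n := by
  refine Nat.eq_of_mul_eq_mul_left n.succ_pos ?_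
  calc (n + 1) * ((n + 2) * catalan (n + 1)) = (n + 1) * (n + 1).centralBinom := by
        rw [← succ_mul_catalan_eq_centralBinom]
    _ = 2 * (2 * n + 1) * n.centralBinom := Nat.succ_mul_centralBinom_succ n
    _ = (n + 1) * (2 * (2 * n + 1) * catalan n) := by
        rw [← succ_mul_catalan_eq_centralBinom]; ring

theorem cast_catalan_succ {K : Type*} [Field K] [CharZero K] (n : ℕ) :
    (catalan (n + 1) : K) = 2 * (2 * n + 1) * catalan n / (n + 2) := by
  rw [eq_div_iff (by norm_cast), mul_comm]
  exact_mod_cast succ_succ_mul_catalan_succ n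

theorem sum_range_catalan_sub_mul_catalan (n : ℕ) :
    ∑ ℓ ∈ range (n + 1), catalan (n - ℓ) * catalan ℓ = catalan (n + 1) := by
  rw [catalan_succ, Fin.sum_univ_eq_sum_range (fun i => catalan i * catalan (n - i))]
  exact sum_congr rfl fun ℓ _ => mul_comm _ _

theorem sum_filter_even_range_two_mul_add_one {M : Type*} [AddCommMonoid M] (g : ℕ → M)
    (m : ℕ) :
    ∑ ℓ ∈ (range (2 * m + 1)).filter Even, g ℓ = ∑ k ∈ range (m + 1), g (2 * k) := by
  have himage : (range (2 * m + 1)).filter Even = (range (m + 1)).image (2 * ·) := by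
    ext ℓ
    simp only [mem_filter, mem_image, mem_range, Nat.even_iff]
    constructor
    · rintro ⟨hℓ, hpar⟩
      exact ⟨ℓ / 2, by omega, by omega⟩
    · rintro ⟨k, hk, rfl⟩
      omega
  rw [himage, sum_image fun a _ b _ h => by omega]

def evenCatalanConv (m : ℕ) : ℕ :=
  ∑ k ∈ range (m + 1), catalan (2 * (m - k)) * catalan (2 * k)

/-- The WZ certificate of the recurrence `evenCatalanConv_recurrence`, found by Zeilberger's
algorithm. -/
noncomputable def evenCatalanConvCert (m k : ℕ) : ℚ :=
  k * (4 * k ^ 2 - 6 * (m + 1) * k - (3 * m + 4)) / ((m + 1) * (2 * m + 3))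
    * catalan (2 * (m + 1 - k)) * catalan (2 * k)

theorem evenCatalanConvCert_succ_sub {m k : ℕ} (hk : k ≤ m) :
    evenCatalanConvCert m (k + 1) - evenCatalanConvCert m k
      = (m + 2) * (catalan (2 * (m + 1 - k)) * catalan (2 * k) : ℚ)
        - 8 * (2 * m + 1) * (catalan (2 * (m - k)) * catalan (2 * k) : ℚ) := by
  obtain ⟨j, rfl⟩ : ∃ j, m = j + k := ⟨m - k, by omega⟩
  simp only [evenCatalanConvCert]
  rw [show j + k + 1 - (k + 1) = j by omega, show j + k + 1 - k = j + 1 by omega,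
    show j + k - k = j by omega, show 2 * (j + 1) = 2 * j + 1 + 1 by ring,
    show 2 * (k + 1) = 2 * k + 1 + 1 by ring, cast_catalan_succ (2 * j + 1),
    cast_catalan_succ (2 * j), cast_catalan_succ (2 * k + 1), cast_catalan_succ (2 * k)]
  push_cast
  field_simp
  ring

theorem evenCatalanConv_recurrence (m : ℕ) :
    (m + 2) * evenCatalanConv (m + 1) = 8 * (2 * m + 1) * evenCatalanConv m := by
  have htelescope := sum_range_sub (evenCatalanConvCert m) (m + 1)
  rw [sum_congr rfl fun k hk =>
      evenCatalanConvCert_succ_sub (Nat.lt_succ_iff.mp (mem_range.mp hk)),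
    sum_sub_distrib, ← mul_sum, ← mul_sum] at htelescope
  have hbot : evenCatalanConvCert m 0 = 0 := by simp [evenCatalanConvCert]
  have htop : evenCatalanConvCert m (m + 1) = -(m + 2) * catalan (2 * (m + 1)) := by
    rw [evenCatalanConvCert, Nat.sub_self, mul_zero, catalan_zero]
    field_simp
    push_cast
    ring
  have hshift : ∑ k ∈ range (m + 1), (catalan (2 * (m + 1 - k)) * catalan (2 * k) : ℚ)
      = evenCatalanConv (m + 1) - catalan (2 * (m + 1)) := by
    rw [evenCatalanConv, sum_range_succ _ (m + 1)]
    simp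
  have hconv : ∑ k ∈ range (m + 1), (catalan (2 * (m - k)) * catalan (2 * k) : ℚ)
      = evenCatalanConv m := by
    push_cast [evenCatalanConv]
    rfl
  rw [hshift, hconv, htop, hbot] at htelescope
  qify
  linarith

theorem evenCatalanConv_eq (m : ℕ) : evenCatalanConv m = 4 ^ m * catalan m := by
  induction m with
  | zero => simp [evenCatalanConv]
  | succ m ih =>
    refine Nat.eq_of_mul_eq_mul_left (by omega : 0 < m + 2) ?_
    rw [evenCatalanConv_recurrence, ih, mul_left_comm (m + 2), succ_succ_mul_catalan_succ]
    ring

theorem catalanEvenPart_two_mul (m : ℕ) :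
    catalanEvenPart (2 * m) = 4 ^ m * catalan m / catalan (2 * m + 1) := by
  have hnum : ∑ ℓ ∈ (range (2 * m + 1)).filter (fun ℓ => Even ℓ),
      (catalan (2 * m - ℓ) * catalan ℓ : ℚ) = evenCatalanConv m := by
    rw [sum_filter_even_range_two_mul_add_one, evenCatalanConv]
    push_cast
    simp only [Nat.mul_sub]
  have hden : ∑ ℓ ∈ range (2 * m + 1), (catalan (2 * m - ℓ) * catalan ℓ : ℚ)
      = catalan (2 * m + 1) := by
    exact_mod_cast sum_range_catalan_sub_mul_catalan (2 * m)
  rw [catalanEvenPart, hnum, hden, evenCatalanConv_eq]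
  norm_cast

theorem catalanEvenPart_two_mul_add_two (m : ℕ) :
    catalanEvenPart (2 * (m + 1))
      = 4 * (2 * m + 1) * (2 * m + 3) / ((4 * m + 3) * (4 * m + 5)) * catalanEvenPart (2 * m) := by
  rw [catalanEvenPart_two_mul, catalanEvenPart_two_mul,
    show 2 * (m + 1) + 1 = 2 * m + 1 + 1 + 1 by ring, cast_catalan_succ (2 * m + 1 + 1),
    cast_catalan_succ (2 * m + 1), cast_catalan_succ m]
  push_cast
  field_simp
  ring

/-- E(2m) is non-increasing in m. -/
theorem catalanEvenPart_even_antitone :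
    Antitone (fun m : ℕ => catalanEvenPart (2 * m)) := by
  refine antitone_nat_of_succ_le fun m => ?_
  have hnonneg : 0 ≤ catalanEvenPart (2 * m) := by
    rw [catalanEvenPart_two_mul]
    positivity
  have hratio : 4 * (2 * m + 1) * (2 * m + 3) / ((4 * m + 3) * (4 * m + 5)) ≤ (1 : ℚ) := by
    rw [div_le_one (by positivity)]
    nlinarith
  rw [catalanEvenPart_two_mul_add_two]
  exact mul_le_of_le_one_left hnonneg hratio
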